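/- Let X be a metric space with a consistent convex geodesic bicombing σ. Then Σ(A,B,t) = cco(⋃_{a∈A} ⋃_{b∈B} {σ(a,b,t)}) defines a conical geodesic bicombing on the space CB(X) of nonempty closed bounded σ-convex subsets of X equipped with the Hausdorff metric: Σ(A,B,·) is a linearly reparametrized geodesic from A to B, and d_H(Σ(A,B,t), Σ(C,D,t)) ≤ (1−t)·d_H(A,C) + t·d_H(B,D) for all A,B,C,D ∈ CB(X) and t ∈ [0,1]. -/

import Mathlib

/-- A set is σ-convex if it is closed under the bicombing σ for t ∈ [0,1]. -/
def SigmaConvex {X : Type*} [MetricSpace X] (σ : X → X → ℝ → X) (C : Set X) : Prop :=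
  ∀ x ∈ C, ∀ y ∈ C, ∀ t ∈ Set.Icc (0:ℝ) 1, σ x y t ∈ C

/-- Closed σ-convex hull. -/
def cco {X : Type*} [MetricSpace X] (σ : X → X → ℝ → X) (A : Set X) : Set X :=
  ⋂₀ {C : Set X | IsClosed C ∧ SigmaConvex σ C ∧ A ⊆ C}

/-- The element of CB(X): nonempty, closed, bounded, σ-convex. -/
def MemCB {X : Type*} [MetricSpace X] (σ : X → X → ℝ → X) (A : Set X) : Prop :=
  A.Nonempty ∧ IsClosed A ∧ Bornology.IsBounded A ∧ SigmaConvex σ A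

/-!
Convexity of σ yields the conical inequality
`d(σ(a,b,t), σ(c,d,t)) ≤ (1-t) d(a,c) + t d(b,d)`, and with it
`infDist (σ(x,y,t)) K ≤ (1-t) infDist x C + t infDist y D` whenever σ maps `C × D` into `K` at
time `t`. Hence closed neighbourhoods `{x | infDist x C ≤ r}` of σ-convex sets are closed and
σ-convex, so a bound `infDist u (cco V) ≤ ρ` on the generators `u ∈ U` extends to all of `cco U`:
Hausdorff estimates between hulls reduce to estimates between generating points `σ(a,b,t)`.
This gives the conical inequality for `Σ` at once. For `s < t`, consistency writes
`σ(a,b,t) = σ(σ(a,b,s), b, θ)` with `θ = (t-s)/(1-s)`; replacing `b` by `σ(a',b,s)` for `a' ∈ A`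
close to `b` gives a point of `Σ(A,B,s)` within `θ (1-s) d(a',b) = (t-s) d(a',b)` of `σ(a,b,t)`;
likewise `σ(a,b,s) = σ(a, σ(a,b,t), s/t)` handles the other direction. So
`d_H(Σ_s, Σ_t) ≤ |t-s| d_H(A,B)`, and equality follows from the triangle inequality through
`Σ_0 = A` and `Σ_1 = B`.
-/

open Metric Set

theorem Metric.le_mul_infDist {X : Type*} [PseudoMetricSpace X] {x : X} {s : Set X} {c r : ℝ}
    (hc : 0 ≤ c) (hs : s.Nonempty) (h : ∀ y ∈ s, r ≤ c * dist x y) : r ≤ c * infDist x s := by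
  rcases hc.eq_or_lt with rfl | hc
  · obtain ⟨y, hy⟩ := hs
    simpa using h y hy
  · rw [← div_le_iff₀' hc, le_infDist hs]
    exact fun y hy => (div_le_iff₀' hc).2 (h y hy)

theorem Metric.hausdorffDist_eq_abs_sub_mul_of_le {X : Type*} [PseudoMetricSpace X]
    {S : ℝ → Set X} {A B : Set X} (hS0 : S 0 = A) (hS1 : S 1 = B)
    (hfin : ∀ s ∈ Icc (0:ℝ) 1, ∀ t ∈ Icc (0:ℝ) 1, hausdorffEDist (S s) (S t) ≠ ⊤)
    (hle : ∀ s t : ℝ, 0 ≤ s → s ≤ t → t ≤ 1 →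
      hausdorffDist (S s) (S t) ≤ (t - s) * hausdorffDist A B) :
    ∀ s ∈ Icc (0:ℝ) 1, ∀ t ∈ Icc (0:ℝ) 1,
      hausdorffDist (S s) (S t) = |t - s| * hausdorffDist A B := by
  subst hS0 hS1
  have I0 : (0:ℝ) ∈ Icc (0:ℝ) 1 := left_mem_Icc.2 zero_le_one
  have I1 : (1:ℝ) ∈ Icc (0:ℝ) 1 := right_mem_Icc.2 zero_le_one
  have hordered : ∀ s t : ℝ, 0 ≤ s → s ≤ t → t ≤ 1 →
      hausdorffDist (S s) (S t) = (t - s) * hausdorffDist (S 0) (S 1) := by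
    intro s t hs hst ht
    refine (hle s t hs hst ht).antisymm ?_
    have h0s1 := hausdorffDist_triangle (hfin 0 I0 s ⟨hs, hst.trans ht⟩) (u := S 1)
    have hst1 := hausdorffDist_triangle (hfin s ⟨hs, hst.trans ht⟩ t ⟨hs.trans hst, ht⟩) (u := S 1)
    have h0s := hle 0 s le_rfl hs (hst.trans ht)
    have ht1 := hle t 1 (hs.trans hst) ht le_rfl
    linarith
  intro s hs t ht
  rcases le_total s t with hst | hts
  · rw [hordered s t hs.1 hst ht.2, abs_of_nonneg (sub_nonneg.2 hst)]
  · rw [hausdorffDist_comm, hordered t s ht.1 hts hs.2, abs_of_nonpos (sub_nonpos.2 hts), neg_sub]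

section Bicombing

variable {X : Type*} [MetricSpace X] {σ : X → X → ℝ → X}

theorem subset_cco (A : Set X) : A ⊆ cco σ A :=
  fun _ hx => mem_sInter.2 fun _ hC => hC.2.2 hx

theorem isClosed_cco (A : Set X) : IsClosed (cco σ A) :=
  isClosed_sInter fun _ hC => hC.1

theorem sigmaConvex_cco (A : Set X) : SigmaConvex σ (cco σ A) := fun x hx y hy t ht =>
  mem_sInter.2 fun C hC => hC.2.1 x (mem_sInter.1 hx C hC) y (mem_sInter.1 hy C hC) t ht

theorem cco_subset {A C : Set X} (hC : IsClosed C) (hCσ : SigmaConvex σ C) (hAC : A ⊆ C) :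
    cco σ A ⊆ C :=
  sInter_subset_of_mem ⟨hC, hCσ, hAC⟩

theorem cco_eq_self {A : Set X} (hA : IsClosed A) (hAσ : SigmaConvex σ A) : cco σ A = A :=
  (cco_subset hA hAσ subset_rfl).antisymm (subset_cco A)

theorem MemCB.hausdorffEDist_ne_top {A B : Set X} (hA : MemCB σ A) (hB : MemCB σ B) :
    hausdorffEDist A B ≠ ⊤ :=
  hausdorffEDist_ne_top_of_nonempty_of_bounded hA.1 hB.1 hA.2.2.1 hB.2.2.1

structure IsGeodesicBicombing (σ : X → X → ℝ → X) : Prop where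
  apply_zero : ∀ x y, σ x y 0 = x
  apply_one : ∀ x y, σ x y 1 = y
  dist_apply_apply : ∀ x y, ∀ s ∈ Icc (0:ℝ) 1, ∀ t ∈ Icc (0:ℝ) 1,
    dist (σ x y s) (σ x y t) = |t - s| * dist x y

def IsConical (σ : X → X → ℝ → X) : Prop :=
  ∀ a b c d : X, ∀ t ∈ Icc (0:ℝ) 1, dist (σ a b t) (σ c d t) ≤ (1 - t) * dist a c + t * dist b d

def IsConsistent (σ : X → X → ℝ → X) : Prop :=
  ∀ x y : X, ∀ r ∈ Icc (0:ℝ) 1, ∀ s ∈ Icc (0:ℝ) 1, ∀ t ∈ Icc (0:ℝ) 1, r < s →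
    σ (σ x y r) (σ x y s) t = σ x y ((1 - t) * r + t * s)

/-- `Σ(A, B, t)`. -/
def setBicombing (σ : X → X → ℝ → X) (A B : Set X) (t : ℝ) : Set X :=
  cco σ (image2 (fun a b => σ a b t) A B)

namespace IsGeodesicBicombing

theorem apply_self (hσ : IsGeodesicBicombing σ) (x : X) {t : ℝ} (ht : t ∈ Icc (0:ℝ) 1) :
    σ x x t = x := by
  have h := hσ.dist_apply_apply x x 0 ⟨le_rfl, zero_le_one⟩ t ht
  rw [hσ.apply_zero, dist_self, mul_zero, dist_eq_zero] at h
  exact h.symm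

theorem dist_left_apply (hσ : IsGeodesicBicombing σ) (x y : X) {t : ℝ}
    (ht : t ∈ Icc (0:ℝ) 1) : dist x (σ x y t) = t * dist x y := by
  have h := hσ.dist_apply_apply x y 0 ⟨le_rfl, zero_le_one⟩ t ht
  rwa [hσ.apply_zero, sub_zero, abs_of_nonneg ht.1] at h

theorem dist_apply_right (hσ : IsGeodesicBicombing σ) (x y : X) {t : ℝ}
    (ht : t ∈ Icc (0:ℝ) 1) : dist (σ x y t) y = (1 - t) * dist x y := by
  have h := hσ.dist_apply_apply x y t ht 1 ⟨zero_le_one, le_rfl⟩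
  rwa [hσ.apply_one, abs_of_nonneg (sub_nonneg.2 ht.2)] at h

end IsGeodesicBicombing

theorem isConical_of_convexOn (h0 : ∀ x y, σ x y 0 = x) (h1 : ∀ x y, σ x y 1 = y)
    (hconvex : ∀ a b c d : X,
      ConvexOn ℝ (Icc (0:ℝ) 1) (fun t => dist (σ a b t) (σ c d t))) :
    IsConical σ := by
  intro a b c d t ht
  have h := (hconvex a b c d).2 (left_mem_Icc.2 zero_le_one) (right_mem_Icc.2 zero_le_one)
    (sub_nonneg.2 ht.2) ht.1 (sub_add_cancel 1 t)
  simpa [h0, h1] using h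

namespace IsConical

theorem infDist_apply_le (hσ : IsConical σ) {C D K : Set X} {t : ℝ} (ht : t ∈ Icc (0:ℝ) 1)
    (hC : C.Nonempty) (hD : D.Nonempty) (hK : ∀ c ∈ C, ∀ d ∈ D, σ c d t ∈ K) (x y : X) :
    infDist (σ x y t) K ≤ (1 - t) * infDist x C + t * infDist y D := by
  have hpt : ∀ c ∈ C, ∀ d ∈ D, infDist (σ x y t) K ≤ (1 - t) * dist x c + t * dist y d :=
    fun c hc d hd => (infDist_le_dist_of_mem (hK c hc d hd)).trans (hσ x y c d t ht)
  have hC' : ∀ d ∈ D, infDist (σ x y t) K - t * dist y d ≤ (1 - t) * infDist x C :=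
    fun d hd => le_mul_infDist (sub_nonneg.2 ht.2) hC fun c hc => by linarith [hpt c hc d hd]
  have hD' : infDist (σ x y t) K - (1 - t) * infDist x C ≤ t * infDist y D :=
    le_mul_infDist ht.1 hD fun d hd => by linarith [hC' d hd]
  linarith

theorem sigmaConvex_setOf_infDist_le (hσ : IsConical σ) {C : Set X} (hC : SigmaConvex σ C)
    (r : ℝ) : SigmaConvex σ {x | infDist x C ≤ r} := by
  intro x hx y hy t ht
  rcases C.eq_empty_or_nonempty with rfl | hne
  · simpa using hx
  calc infDist (σ x y t) C ≤ (1 - t) * infDist x C + t * infDist y C :=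
        hσ.infDist_apply_le ht hne hne (fun c hc d hd => hC c hc d hd t ht) x y
    _ ≤ (1 - t) * r + t * r := by
        gcongr
        · exact sub_nonneg.2 ht.2
        · exact hx
        · exact ht.1
        · exact hy
    _ = r := by ring

theorem sigmaConvex_closedBall (hσ : IsConical σ) {x : X} (hx : ∀ t ∈ Icc (0:ℝ) 1, σ x x t = x)
    (r : ℝ) : SigmaConvex σ (closedBall x r) := by
  have h := hσ.sigmaConvex_setOf_infDist_le (C := {x}) (by rintro _ rfl _ rfl t ht; exact hx t ht) r
  simp only [infDist_singleton] at h
  exact h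

theorem infDist_le_of_mem_cco (hσ : IsConical σ) {U V : Set X} {ρ : ℝ}
    (h : ∀ u ∈ U, infDist u (cco σ V) ≤ ρ) {x : X} (hx : x ∈ cco σ U) :
    infDist x (cco σ V) ≤ ρ :=
  cco_subset (isClosed_le (continuous_infDist_pt _) continuous_const)
    (hσ.sigmaConvex_setOf_infDist_le (sigmaConvex_cco V) ρ) h hx

theorem hausdorffDist_cco_le (hσ : IsConical σ) {U V : Set X} {ρ : ℝ} (hρ : 0 ≤ ρ)
    (hUV : ∀ u ∈ U, infDist u (cco σ V) ≤ ρ) (hVU : ∀ v ∈ V, infDist v (cco σ U) ≤ ρ) :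
    hausdorffDist (cco σ U) (cco σ V) ≤ ρ :=
  hausdorffDist_le_of_infDist hρ (fun _ hx => hσ.infDist_le_of_mem_cco hUV hx)
    (fun _ hx => hσ.infDist_le_of_mem_cco hVU hx)

theorem memCB_setBicombing (hσ : IsConical σ) (hself : ∀ x, ∀ t ∈ Icc (0:ℝ) 1, σ x x t = x)
    {A B : Set X} (hA : MemCB σ A) (hB : MemCB σ B) {t : ℝ} (ht : t ∈ Icc (0:ℝ) 1) :
    MemCB σ (setBicombing σ A B t) := by
  obtain ⟨a, -⟩ := hA.1
  obtain ⟨r, hr⟩ := (hA.2.2.1.union hB.2.2.1).subset_closedBall a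
  have hball := hσ.sigmaConvex_closedBall (hself a) r
  have hgen : image2 (fun a b => σ a b t) A B ⊆ closedBall a r :=
    image2_subset_iff.2 fun x hx y hy => hball x (hr (Or.inl hx)) y (hr (Or.inr hy)) t ht
  exact ⟨(hA.1.image2 hB.1).mono (subset_cco _), isClosed_cco _,
    isBounded_closedBall.subset (cco_subset isClosed_closedBall hball hgen), sigmaConvex_cco _⟩

theorem infDist_apply_setBicombing_le (hσ : IsConical σ) {A B C D : Set X}
    (hA : MemCB σ A) (hB : MemCB σ B) (hC : MemCB σ C) (hD : MemCB σ D)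
    {t : ℝ} (ht : t ∈ Icc (0:ℝ) 1) {a b : X} (ha : a ∈ A) (hb : b ∈ B) :
    infDist (σ a b t) (setBicombing σ C D t) ≤
      (1 - t) * hausdorffDist A C + t * hausdorffDist B D := by
  refine (hσ.infDist_apply_le ht hC.1 hD.1
    (fun _ hc _ hd => subset_cco _ (mem_image2_of_mem hc hd)) a b).trans ?_
  gcongr
  · exact sub_nonneg.2 ht.2
  · exact infDist_le_hausdorffDist_of_mem ha (hA.hausdorffEDist_ne_top hC)
  · exact ht.1
  · exact infDist_le_hausdorffDist_of_mem hb (hB.hausdorffEDist_ne_top hD)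

theorem hausdorffDist_setBicombing_le (hσ : IsConical σ) {A B C D : Set X}
    (hA : MemCB σ A) (hB : MemCB σ B) (hC : MemCB σ C) (hD : MemCB σ D)
    {t : ℝ} (ht : t ∈ Icc (0:ℝ) 1) :
    hausdorffDist (setBicombing σ A B t) (setBicombing σ C D t) ≤
      (1 - t) * hausdorffDist A C + t * hausdorffDist B D := by
  refine hσ.hausdorffDist_cco_le (add_nonneg (mul_nonneg (sub_nonneg.2 ht.2) hausdorffDist_nonneg)
    (mul_nonneg ht.1 hausdorffDist_nonneg))
    (forall_mem_image2.2 fun a ha b hb => hσ.infDist_apply_setBicombing_le hA hB hC hD ht ha hb)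
    (forall_mem_image2.2 fun c hc d hd => ?_)
  rw [hausdorffDist_comm (s := A), hausdorffDist_comm (s := B)]
  exact hσ.infDist_apply_setBicombing_le hC hD hA hB ht hc hd

end IsConical

theorem setBicombing_zero (h0 : ∀ x y, σ x y 0 = x) {A B : Set X} (hA : IsClosed A)
    (hAσ : SigmaConvex σ A) (hB : B.Nonempty) : setBicombing σ A B 0 = A := by
  simp only [setBicombing, h0, image2_left hB]
  exact cco_eq_self hA hAσ

theorem setBicombing_one (h1 : ∀ x y, σ x y 1 = y) {A B : Set X} (hA : A.Nonempty)
    (hB : IsClosed B) (hBσ : SigmaConvex σ B) : setBicombing σ A B 1 = B := by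
  simp only [setBicombing, h1, image2_right hA]
  exact cco_eq_self hB hBσ

namespace IsGeodesicBicombing

variable {A B : Set X} {a b : X} {s t : ℝ}

theorem infDist_apply_setBicombing_le_sub_mul_infDist_snd (hσ : IsGeodesicBicombing σ)
    (hcon : IsConical σ) (hcons : IsConsistent σ) (ha : a ∈ A) (hb : b ∈ B)
    (hs : 0 ≤ s) (hst : s < t) (ht : t ≤ 1) :
    infDist (σ a b t) (setBicombing σ A B s) ≤ (t - s) * infDist b A := by
  refine le_mul_infDist (sub_nonneg.2 hst.le) ⟨a, ha⟩ fun a' ha' => ?_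
  have hs1 : 0 < 1 - s := by linarith
  set θ := (t - s) / (1 - s) with hθ_def
  have hθ : θ ∈ Icc (0:ℝ) 1 := ⟨by positivity, (div_le_one hs1).2 (by linarith)⟩
  have hsplit : σ (σ a b s) b θ = σ a b t := by
    have h := hcons a b s ⟨hs, by linarith⟩ 1 ⟨zero_le_one, le_rfl⟩ θ hθ (by linarith)
    rwa [hσ.apply_one, show (1 - θ) * s + θ * 1 = t by rw [hθ_def]; field_simp; ring] at h
  have hmem : σ (σ a b s) (σ a' b s) θ ∈ setBicombing σ A B s :=
    sigmaConvex_cco _ _ (subset_cco _ (mem_image2_of_mem ha hb))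
      _ (subset_cco _ (mem_image2_of_mem ha' hb)) θ hθ
  calc infDist (σ a b t) (setBicombing σ A B s)
      ≤ dist (σ a b t) (σ (σ a b s) (σ a' b s) θ) := infDist_le_dist_of_mem hmem
    _ ≤ (1 - θ) * dist (σ a b s) (σ a b s) + θ * dist b (σ a' b s) :=
        hsplit ▸ hcon _ _ _ _ θ hθ
    _ = θ * ((1 - s) * dist b a') := by
        rw [dist_self, dist_comm b, hσ.dist_apply_right a' b ⟨hs, by linarith⟩, dist_comm a']
        ring
    _ = (t - s) * dist b a' := by rw [hθ_def]; field_simp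

theorem infDist_apply_setBicombing_le_sub_mul_infDist_fst (hσ : IsGeodesicBicombing σ)
    (hcon : IsConical σ) (hcons : IsConsistent σ) (ha : a ∈ A) (hb : b ∈ B)
    (hs : 0 ≤ s) (hst : s < t) (ht : t ≤ 1) :
    infDist (σ a b s) (setBicombing σ A B t) ≤ (t - s) * infDist a B := by
  refine le_mul_infDist (sub_nonneg.2 hst.le) ⟨b, hb⟩ fun b' hb' => ?_
  have ht0 : 0 < t := by linarith
  set θ := s / t with hθ_def
  have hθ : θ ∈ Icc (0:ℝ) 1 := ⟨by positivity, (div_le_one ht0).2 hst.le⟩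
  have hsplit : σ a (σ a b t) θ = σ a b s := by
    have h := hcons a b 0 ⟨le_rfl, zero_le_one⟩ t ⟨ht0.le, ht⟩ θ hθ ht0
    rwa [hσ.apply_zero, show (1 - θ) * 0 + θ * t = s by rw [hθ_def]; field_simp; ring] at h
  have hmem : σ (σ a b' t) (σ a b t) θ ∈ setBicombing σ A B t :=
    sigmaConvex_cco _ _ (subset_cco _ (mem_image2_of_mem ha hb'))
      _ (subset_cco _ (mem_image2_of_mem ha hb)) θ hθ
  calc infDist (σ a b s) (setBicombing σ A B t)
      ≤ dist (σ a b s) (σ (σ a b' t) (σ a b t) θ) := infDist_le_dist_of_mem hmem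
    _ ≤ (1 - θ) * dist a (σ a b' t) + θ * dist (σ a b t) (σ a b t) :=
        hsplit ▸ hcon _ _ _ _ θ hθ
    _ = (1 - θ) * (t * dist a b') := by
        rw [dist_self, hσ.dist_left_apply a b' ⟨ht0.le, ht⟩]
        ring
    _ = (t - s) * dist a b' := by rw [hθ_def]; field_simp

theorem hausdorffDist_setBicombing_le_of_le (hσ : IsGeodesicBicombing σ) (hcon : IsConical σ)
    (hcons : IsConsistent σ) (hA : MemCB σ A) (hB : MemCB σ B)
    (hs : 0 ≤ s) (hst : s ≤ t) (ht : t ≤ 1) :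
    hausdorffDist (setBicombing σ A B s) (setBicombing σ A B t) ≤ (t - s) * hausdorffDist A B := by
  rcases hst.eq_or_lt with rfl | hst
  · simp
  have hts : 0 ≤ t - s := sub_nonneg.2 hst.le
  refine hcon.hausdorffDist_cco_le (mul_nonneg hts hausdorffDist_nonneg) ?_ ?_
  · refine forall_mem_image2.2 fun a ha b hb =>
      (hσ.infDist_apply_setBicombing_le_sub_mul_infDist_fst hcon hcons ha hb hs hst ht).trans ?_
    exact mul_le_mul_of_nonneg_left
      (infDist_le_hausdorffDist_of_mem ha (hA.hausdorffEDist_ne_top hB)) hts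
  · refine forall_mem_image2.2 fun a ha b hb =>
      (hσ.infDist_apply_setBicombing_le_sub_mul_infDist_snd hcon hcons ha hb hs hst ht).trans ?_
    rw [hausdorffDist_comm]
    exact mul_le_mul_of_nonneg_left
      (infDist_le_hausdorffDist_of_mem hb (hB.hausdorffEDist_ne_top hA)) hts

end IsGeodesicBicombing

end Bicombing

/-- Σ(A,B,t) = cco(⋃ σ(a,b,t)) defines a conical geodesic
bicombing on CB(X) with the Hausdorff metric. -/
theorem conical_bicombing_on_CB {X : Type*} [MetricSpace X]
    (σ : X → X → ℝ → X)
    (h0 : ∀ x y, σ x y 0 = x) (h1 : ∀ x y, σ x y 1 = y)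
    (hgeo : ∀ x y, ∀ s ∈ Set.Icc (0:ℝ) 1, ∀ t ∈ Set.Icc (0:ℝ) 1,
      dist (σ x y s) (σ x y t) = |t - s| * dist x y)
    (hconvex : ∀ a b c d : X,
      ConvexOn ℝ (Set.Icc (0:ℝ) 1) (fun t => dist (σ a b t) (σ c d t)))
    (hconsistent : ∀ x y : X, ∀ r ∈ Set.Icc (0:ℝ) 1, ∀ s ∈ Set.Icc (0:ℝ) 1,
      ∀ t ∈ Set.Icc (0:ℝ) 1, r < s →
      σ (σ x y r) (σ x y s) t = σ x y ((1 - t) * r + t * s))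
    (Sig : Set X → Set X → ℝ → Set X)
    (hSig : Sig = fun A B t => cco σ (⋃ a ∈ A, ⋃ b ∈ B, {σ a b t})) :
    (∀ A B : Set X, MemCB σ A → MemCB σ B →
      (∀ t ∈ Set.Icc (0:ℝ) 1, MemCB σ (Sig A B t)) ∧
      Sig A B 0 = A ∧ Sig A B 1 = B ∧
      (∀ s ∈ Set.Icc (0:ℝ) 1, ∀ t ∈ Set.Icc (0:ℝ) 1,
        Metric.hausdorffDist (Sig A B s) (Sig A B t) =
          |t - s| * Metric.hausdorffDist A B)) ∧
    (∀ A B C D : Set X, MemCB σ A → MemCB σ B → MemCB σ C → MemCB σ D →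
      ∀ t ∈ Set.Icc (0:ℝ) 1,
        Metric.hausdorffDist (Sig A B t) (Sig C D t) ≤
          (1 - t) * Metric.hausdorffDist A C + t * Metric.hausdorffDist B D) := by
  have hSig_eq :
      (fun (A B : Set X) (t : ℝ) => cco σ (⋃ a ∈ A, ⋃ b ∈ B, {σ a b t})) = setBicombing σ := by
    funext A B t
    simp only [setBicombing, ← image_eq_iUnion, iUnion_image_left]
  subst hSig
  rw [hSig_eq]
  have hσ : IsGeodesicBicombing σ := ⟨h0, h1, hgeo⟩
  have hcon : IsConical σ := isConical_of_convexOn h0 h1 hconvex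
  have hmem : ∀ {A B : Set X}, MemCB σ A → MemCB σ B → ∀ t ∈ Icc (0:ℝ) 1,
      MemCB σ (setBicombing σ A B t) :=
    fun hA hB t ht => hcon.memCB_setBicombing (fun x _ hs => hσ.apply_self x hs) hA hB ht
  refine ⟨fun A B hA hB => ⟨hmem hA hB, setBicombing_zero h0 hA.2.1 hA.2.2.2 hB.1,
    setBicombing_one h1 hA.1 hB.2.1 hB.2.2.2, ?_⟩,
    fun A B C D hA hB hC hD t ht => hcon.hausdorffDist_setBicombing_le hA hB hC hD ht⟩
  exact hausdorffDist_eq_abs_sub_mul_of_le (setBicombing_zero h0 hA.2.1 hA.2.2.2 hB.1)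
    (setBicombing_one h1 hA.1 hB.2.1 hB.2.2.2)
    (fun s hs t ht => (hmem hA hB s hs).hausdorffEDist_ne_top (hmem hA hB t ht))
    (fun s t hs hst ht => hσ.hausdorffDist_setBicombing_le_of_le hcon hconsistent hA hB hs hst ht)
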